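/- Let m, t ∈ ℕ and a, b : Fin m → Bool. Then Re(2^{−m} · ∑_{θ : Fin m → Bool} Tr[(1 − Π_t^EPR) · Π_θ^eq · |φ⁺_{ab}⟩⟨φ⁺_{ab}|]) ≤ 2^{−(t+1)}. -/

import Mathlib

open Matrix Kronecker

/-- Single-qubit entry of the tensor-product Hadamard unitary `H^θ`:
`c = (1/√2)·(−1)^{u·v}` when the basis bit is `true` (Hadamard basis) and
`c = δ_{u,v}` when it is `false` (computational basis). -/
noncomputable def hadEntry (t u v : Bool) : ℂ :=
  if t then (((Real.sqrt 2)⁻¹ : ℝ) : ℂ) * (if u && v then -1 else 1)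
  else if u = v then 1 else 0

/-- The tensor-product Hadamard unitary `H^θ` on `m` qubits. -/
noncomputable def hadTheta {m : ℕ} (θ : Fin m → Bool) :
    Matrix (Fin m → Bool) (Fin m → Bool) ℂ :=
  Matrix.of fun u v => ∏ i, hadEntry (θ i) (u i) (v i)

/-- The `m`-qubit EPR state `|φ⁺⟩ = 2^{-m/2} ∑_v |v⟩ ⊗ |v⟩`. -/
noncomputable def epr (m : ℕ) : (Fin m → Bool) × (Fin m → Bool) → ℂ :=
  fun p => if p.1 = p.2 then (((Real.sqrt (2 ^ m))⁻¹ : ℝ) : ℂ) else 0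

/-- Bitwise XOR of Boolean strings. -/
def xorV {m : ℕ} (a b : Fin m → Bool) : Fin m → Bool := fun i => xor (a i) (b i)

/-- The inner product `b·v = ∑ i, b_i·v_i` (as a natural number). -/
def dotB {m : ℕ} (b v : Fin m → Bool) : ℕ := ∑ i, (if b i && v i then 1 else 0)

/-- The Pauli operator `X^a Z^b`, with `X^a Z^b |v⟩ = (−1)^{b·v} |v ⊕ a⟩`. -/
noncomputable def XZ {m : ℕ} (a b : Fin m → Bool) :
    Matrix (Fin m → Bool) (Fin m → Bool) ℂ :=
  Matrix.of fun u v => if u = xorV v a then (-1 : ℂ) ^ dotB b v else 0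

/-- The damaged EPR state `|φ⁺_{ab}⟩ = (1 ⊗ X^a Z^b)|φ⁺⟩`. -/
noncomputable def phiAB {m : ℕ} (a b : Fin m → Bool) :
    (Fin m → Bool) × (Fin m → Bool) → ℂ :=
  ((1 : Matrix (Fin m → Bool) (Fin m → Bool) ℂ) ⊗ₖ XZ a b).mulVec (epr m)

/-- The projector `Π_θ^eq = ∑_v (H^θ|v⟩⟨v|H^θ) ⊗ (H^θ|v⟩⟨v|H^θ)` onto states of two
`m`-qubit registers yielding equal outcomes when both are measured in the `H^θ` basis. -/
noncomputable def PiEq {m : ℕ} (θ : Fin m → Bool) :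
    Matrix ((Fin m → Bool) × (Fin m → Bool)) ((Fin m → Bool) × (Fin m → Bool)) ℂ :=
  ∑ v : Fin m → Bool,
    (hadTheta θ * Matrix.single v v 1 * hadTheta θ) ⊗ₖ
      (hadTheta θ * Matrix.single v v 1 * hadTheta θ)

/-- Hamming weight of a Boolean string. -/
def hw {m : ℕ} (a : Fin m → Bool) : ℕ := ∑ i, (if a i then 1 else 0)

/-- `Π_t^EPR = ∑_{a,b : w(a) ≤ t, w(b) ≤ t} |φ⁺_{ab}⟩⟨φ⁺_{ab}|`, the projector onto
the span of EPR pairs with at most `t` Pauli errors of each type. -/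
noncomputable def PiEPR (m t : ℕ) :
    Matrix ((Fin m → Bool) × (Fin m → Bool)) ((Fin m → Bool) × (Fin m → Bool)) ℂ :=
  ∑ a : Fin m → Bool, ∑ b : Fin m → Bool,
    if hw a ≤ t ∧ hw b ≤ t then Matrix.vecMulVec (phiAB a b) (star (phiAB a b)) else 0

/-!
The states `|φ⁺_{ab}⟩` are orthonormal eigenvectors of both projectors:
`Π_t^EPR |φ⁺_{ab}⟩ = [w(a) ≤ t ∧ w(b) ≤ t] |φ⁺_{ab}⟩` by orthonormality, and
`Π_θ^eq |φ⁺_{ab}⟩ = [θ undetecting] |φ⁺_{ab}⟩`, where `θ` is undetecting when on no qubit does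
`X^{a_i} Z^{b_i}` flip the outcome of a measurement in basis `θ_i`. As all operators involved
are tensor products over the qubits, the latter is a single-qubit computation. So the trace is
the indicator of "`θ` undetecting and `(a, b)` outside the correctable set". An undetecting `θ`
is determined on the support of `a` and on that of `b`, so there are at most
`2^{m - max(w(a), w(b))} ≤ 2^{m - t - 1}` of them.
-/

open scoped Finset

lemma Fintype.sum_sum_prod_eq_prod_sum_sum {ι κ R : Type*} [Fintype ι] [DecidableEq ι]
    [Fintype κ] [CommSemiring R] (f : ι → κ → κ → R) :
    ∑ w : ι → κ, ∑ w' : ι → κ, ∏ i, f i (w i) (w' i) = ∏ i, ∑ x, ∑ y, f i x y := by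
  simp only [Fintype.prod_sum (fun i x => ∑ y, f i x y), Fintype.prod_sum (fun i y => f i _ y)]

lemma Matrix.mul_single_one_mul_apply {n α : Type*} [Fintype n] [DecidableEq n]
    [Semiring α] (A B : Matrix n n α) (v x y : n) :
    (A * single v v (1 : α) * B) x y = A x v * B v y := by
  rw [single_eq_single_vecMulVec_single, mul_vecMulVec, vecMulVec_mul, mulVec_single_one,
    single_one_vecMul, vecMulVec_apply]
  rfl

lemma Matrix.trace_mul_vecMulVec {n α : Type*} [Fintype n] [CommSemiring α]
    (M : Matrix n n α) (x y : n → α) : trace (M * vecMulVec x y) = y ⬝ᵥ M *ᵥ x := by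
  rw [mul_vecMulVec, trace_vecMulVec, dotProduct_comm]

lemma ofReal_inv_sqrt_two_pow_mul_self (m : ℕ) :
    (((Real.sqrt (2 ^ m))⁻¹ : ℝ) : ℂ) * (((Real.sqrt (2 ^ m))⁻¹ : ℝ) : ℂ) = ((2 : ℂ) ^ m)⁻¹ := by
  rw [← Complex.ofReal_mul, ← mul_inv, Real.mul_self_sqrt (by positivity)]
  push_cast
  rfl

lemma ofReal_sqrt_two_pow_four : ((Real.sqrt 2 : ℝ) : ℂ) ^ 4 = 4 := by
  rw [show 4 = 2 * 2 from rfl, pow_mul, ← Complex.ofReal_pow, Real.sq_sqrt zero_le_two]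
  norm_num

def pauliPairEntry (a b x y : Bool) : ℂ :=
  if y = (x ^^ a) then (-1) ^ (if b && x then 1 else 0) else 0

lemma XZ_apply_eq_prod {m : ℕ} (a b u u' : Fin m → Bool) :
    XZ a b u' u = ∏ i, pauliPairEntry (a i) (b i) (u i) (u' i) := by
  simp only [XZ, of_apply, pauliPairEntry, Fintype.prod_ite_zero, Finset.prod_pow_eq_pow_sum,
    funext_iff, xorV, dotB]

lemma phiAB_apply {m : ℕ} (a b u u' : Fin m → Bool) :
    phiAB a b (u, u') =
      (((Real.sqrt (2 ^ m))⁻¹ : ℝ) : ℂ) * ∏ i, pauliPairEntry (a i) (b i) (u i) (u' i) := by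
  simp only [phiAB, mulVec, dotProduct, Fintype.sum_prod_type, kroneckerMap_apply, one_apply,
    ite_mul, one_mul, zero_mul, Finset.sum_ite_eq, Finset.mem_univ, if_true, epr, mul_ite, mul_zero]
  rw [XZ_apply_eq_prod, mul_comm]

lemma pauliPairEntry_orthogonal (a b a' b' : Bool) :
    ∑ x, ∑ y, star (pauliPairEntry a' b' x y) * pauliPairEntry a b x y =
      if a = a' ∧ b = b' then 2 else 0 := by
  cases a <;> cases b <;> cases a' <;> cases b' <;> norm_num [pauliPairEntry]

lemma phiAB_inner {m : ℕ} (a b a' b' : Fin m → Bool) :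
    star (phiAB a' b') ⬝ᵥ phiAB a b = if a = a' ∧ b = b' then 1 else 0 := by
  have hterm : ∀ u u' : Fin m → Bool, star (phiAB a' b' (u, u')) * phiAB a b (u, u') =
      ((2 : ℂ) ^ m)⁻¹ * ∏ i, star (pauliPairEntry (a' i) (b' i) (u i) (u' i)) *
        pauliPairEntry (a i) (b i) (u i) (u' i) := by
    intro u u'
    rw [phiAB_apply, phiAB_apply, star_mul', star_prod, Complex.star_def, Complex.conj_ofReal,
      Finset.prod_mul_distrib, ← ofReal_inv_sqrt_two_pow_mul_self]
    ring
  have hsum : ∑ u : Fin m → Bool, ∑ u' : Fin m → Bool,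
      ∏ i, star (pauliPairEntry (a' i) (b' i) (u i) (u' i)) *
        pauliPairEntry (a i) (b i) (u i) (u' i) = if a = a' ∧ b = b' then (2 : ℂ) ^ m else 0 := by
    rw [Fintype.sum_sum_prod_eq_prod_sum_sum fun i x y =>
      star (pauliPairEntry (a' i) (b' i) x y) * pauliPairEntry (a i) (b i) x y]
    simp only [pauliPairEntry_orthogonal, Fintype.prod_ite_zero, Finset.prod_const,
      Finset.card_univ, Fintype.card_fin, funext_iff, forall_and]
  simp only [dotProduct, Fintype.sum_prod_type, Pi.star_apply, hterm, ← Finset.mul_sum, hsum]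
  split_ifs <;> simp

lemma PiEPR_mulVec_phiAB {m : ℕ} (t : ℕ) (a b : Fin m → Bool) :
    PiEPR m t *ᵥ phiAB a b = if hw a ≤ t ∧ hw b ≤ t then phiAB a b else 0 := by
  simp only [PiEPR, sum_mulVec, apply_ite (· *ᵥ phiAB a b), zero_mulVec, vecMulVec_mulVec,
    op_smul_eq_smul, phiAB_inner, ite_smul, one_smul, zero_smul]
  rw [Fintype.sum_eq_single a fun a' ha' => by simp [Ne.symm ha'],
    Fintype.sum_eq_single b fun b' hb' => by simp [Ne.symm hb']]
  simp

/-- `X^a Z^b` flips the outcome of a measurement in basis `θ` iff this bit is set: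
`Z` flips Hadamard-basis outcomes, `X` computational-basis ones. -/
def outcomeFlip (θ a b : Bool) : Bool := if θ then b else a

noncomputable def eqProjEntry (θ u u' x y : Bool) : ℂ :=
  ∑ z, hadEntry θ u z * hadEntry θ z x * (hadEntry θ u' z * hadEntry θ z y)

lemma PiEq_apply {m : ℕ} (θ u u' w w' : Fin m → Bool) :
    PiEq θ (u, u') (w, w') = ∏ i, eqProjEntry (θ i) (u i) (u' i) (w i) (w' i) := by
  simp only [eqProjEntry, Finset.prod_mul_distrib, PiEq, Matrix.sum_apply, kroneckerMap_apply,
    mul_single_one_mul_apply, hadTheta, of_apply,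
    Fintype.prod_sum fun i z => hadEntry (θ i) (u i) z * hadEntry (θ i) z (w i) *
      (hadEntry (θ i) (u' i) z * hadEntry (θ i) z (w' i))]

lemma eqProjEntry_mul_pauliPairEntry (θ a b u u' : Bool) :
    ∑ x, ∑ y, eqProjEntry θ u u' x y * pauliPairEntry a b x y =
      if outcomeFlip θ a b = false then pauliPairEntry a b u u' else 0 := by
  cases θ <;> cases a <;> cases b <;> cases u <;> cases u' <;>
    simp [eqProjEntry, hadEntry, pauliPairEntry, outcomeFlip] <;> ring_nf <;>
    simp [ofReal_sqrt_two_pow_four]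

def undetectingBases {m : ℕ} (a b : Fin m → Bool) : Finset (Fin m → Bool) :=
  Fintype.piFinset fun i => {x | outcomeFlip x (a i) (b i) = false}

lemma PiEq_mulVec_phiAB {m : ℕ} (θ a b : Fin m → Bool) :
    PiEq θ *ᵥ phiAB a b = if θ ∈ undetectingBases a b then phiAB a b else 0 := by
  ext ⟨u, u'⟩
  have hterm : ∀ w w' : Fin m → Bool, PiEq θ (u, u') (w, w') * phiAB a b (w, w') =
      (((Real.sqrt (2 ^ m))⁻¹ : ℝ) : ℂ) * ∏ i, eqProjEntry (θ i) (u i) (u' i) (w i) (w' i) *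
        pauliPairEntry (a i) (b i) (w i) (w' i) := by
    intro w w'
    rw [PiEq_apply, phiAB_apply, Finset.prod_mul_distrib]
    ring
  simp only [mulVec, dotProduct, Fintype.sum_prod_type, hterm, ← Finset.mul_sum]
  rw [Fintype.sum_sum_prod_eq_prod_sum_sum fun i x y =>
    eqProjEntry (θ i) (u i) (u' i) x y * pauliPairEntry (a i) (b i) x y]
  simp only [eqProjEntry_mul_pauliPairEntry, Fintype.prod_ite_zero, mul_ite, mul_zero,
    ← phiAB_apply]
  split_ifs <;> simp_all [undetectingBases]

lemma trace_one_sub_PiEPR_mul_PiEq_phiAB {m : ℕ} (t : ℕ) (θ a b : Fin m → Bool) :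
    trace ((1 - PiEPR m t) * PiEq θ * vecMulVec (phiAB a b) (star (phiAB a b))) =
      if θ ∈ undetectingBases a b ∧ ¬(hw a ≤ t ∧ hw b ≤ t) then 1 else 0 := by
  rw [trace_mul_vecMulVec, ← mulVec_mulVec, PiEq_mulVec_phiAB]
  by_cases hθ : θ ∈ undetectingBases a b <;> by_cases hgood : hw a ≤ t ∧ hw b ≤ t <;>
    simp [hθ, hgood, sub_mulVec, PiEPR_mulVec_phiAB, phiAB_inner]

lemma card_piFinset_mul_two_pow_hw_le {m : ℕ} (s : Fin m → Finset Bool) (c : Fin m → Bool)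
    (hs : ∀ i, c i = true → #(s i) ≤ 1) : #(Fintype.piFinset s) * 2 ^ hw c ≤ 2 ^ m := by
  have hfactor : ∀ i, #(s i) * 2 ^ (if c i then 1 else 0) ≤ 2 := by
    intro i
    cases hc : c i
    · simpa using (s i).card_le_univ
    · simpa using hs i hc
  calc #(Fintype.piFinset s) * 2 ^ hw c
      = ∏ i, #(s i) * 2 ^ (if c i then 1 else 0) := by
        rw [Fintype.card_piFinset, hw, ← Finset.prod_pow_eq_pow_sum, Finset.prod_mul_distrib]
    _ ≤ ∏ _i : Fin m, 2 := Finset.prod_le_prod' fun i _ => hfactor i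
    _ = 2 ^ m := by simp

lemma card_undetectingBases_mul_le {m t : ℕ} (a b : Fin m → Bool) (h : t < hw a ∨ t < hw b) :
    #(undetectingBases a b) * 2 ^ (t + 1) ≤ 2 ^ m := by
  have key : ∀ c : Fin m → Bool, t < hw c →
      (∀ i, c i = true → #({x | outcomeFlip x (a i) (b i) = false} : Finset Bool) ≤ 1) →
      #(undetectingBases a b) * 2 ^ (t + 1) ≤ 2 ^ m := fun c hc hs =>
    le_trans (Nat.mul_le_mul_left _ (Nat.pow_le_pow_right two_pos hc))
      (card_piFinset_mul_two_pow_hw_le _ c hs)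
  rcases h with h | h
  · exact key a h fun i => by cases a i <;> cases b i <;> decide
  · exact key b h fun i => by cases a i <;> cases b i <;> decide

/-- The bound `p_{ab} ≤ 2^{-(t+1)}` from the paper's SSL security proof:
averaging over a uniform basis choice `θ`, the overlap of the damaged EPR state
`|φ⁺_{ab}⟩` with the equality test `Π_θ^eq` outside the span of EPR pairs with at
most `t` Pauli errors is at most `2^{-(t+1)}`. -/
theorem pab_bound (m t : ℕ) (a b : Fin m → Bool) :
    ((2 : ℝ) ^ m)⁻¹ *
        (∑ θ : Fin m → Bool,
          Matrix.trace ((1 - PiEPR m t) * PiEq θ *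
            Matrix.vecMulVec (phiAB a b) (star (phiAB a b)))).re ≤
      ((2 : ℝ) ^ (t + 1))⁻¹ := by
  simp only [trace_one_sub_PiEPR_mul_PiEq_phiAB, Finset.sum_boole, Complex.natCast_re]
  by_cases hgood : hw a ≤ t ∧ hw b ≤ t
  · simp [hgood]
  · have hcard := card_undetectingBases_mul_le (t := t) a b (by omega)
    simp only [hgood, not_false_eq_true, and_true, Finset.filter_mem_eq_inter, Finset.univ_inter]
    rw [inv_mul_le_iff₀ (by positivity), ← div_eq_mul_inv, le_div_iff₀ (by positivity)]
    exact_mod_cast hcard
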